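/- Let A ∈ ℂ^{n×n} with ρ(A) < 1. Suppose x, w ∈ l₂ and y ∈ l₂ with y_k = A^k y₀. Then there is a constant C depending only on A such that ‖Λ(x+y, w) − Λ(x, w)‖_F ≤ C max{(‖x‖_∞ + ‖w‖_∞)‖y₀‖₂, ‖y₀‖₂²}, where Λ(u,v) = ∑_k [u_k; v_k][u_k; v_k]*. -/

import Mathlib

open Matrix

/-- Outer product `v v*` of a vector. -/
noncomputable def outer {ι : Type*} [Fintype ι] (v : ι → ℂ) : Matrix ι ι ℂ :=
  Matrix.of fun i j => v i * star (v j)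

/-- Frobenius norm of a complex matrix. -/
noncomputable def frob {ι κ : Type*} [Fintype ι] [Fintype κ] (M : Matrix ι κ ℂ) : ℝ :=
  Real.sqrt (∑ i, ∑ j, ‖M i j‖ ^ 2)

/-- Gramian `Λ(x, w) = ∑ₖ [xₖ; wₖ][xₖ; wₖ]ᴴ` of a stacked signal pair. -/
noncomputable def gram {n m : ℕ} (x : ℕ → Fin n → ℂ) (w : ℕ → Fin m → ℂ) :
    Matrix (Fin n ⊕ Fin m) (Fin n ⊕ Fin m) ℂ :=
  ∑' k, outer (Sum.elim (x k) (w k))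

/-!
With `u_k = [x_k; w_k]` and `v_k = [y_k; 0]`, the `k`-th term of `Λ(x + y, w) - Λ(x, w)` is
`u_k v_k* + v_k u_k* + v_k v_k*`, and a rank-one matrix `a b*` has Frobenius norm `‖a‖₂ ‖b‖₂`.
Since `‖u_k‖₂ ≤ ‖x‖_∞ + ‖w‖_∞` and `‖v_k‖₂ ≤ ‖A^k‖₂ ‖y₀‖₂`, summing over `k` gives the bound with
`C = ∑_k (2‖A^k‖₂ + ‖A^k‖₂²)`. This is finite because, by Gelfand's formula, `‖A^k‖₂ ≤ r^k`
eventually for any `ρ(A) < r < 1`.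
-/

open Filter WithLp
open scoped ENNReal

theorem summable_norm_pow_of_spectralRadius_lt_one {A : Type*} [NormedRing A]
    [NormedAlgebra ℂ A] [CompleteSpace A] {a : A} (ha : spectralRadius ℂ a < 1) :
    Summable fun k => ‖a ^ k‖ := by
  obtain ⟨r, hρr, hr1⟩ := ENNReal.lt_iff_exists_nnreal_btwn.mp ha
  have hroot : ∀ᶠ k : ℕ in atTop, (‖a ^ k‖₊ : ℝ≥0∞) ^ (1 / k : ℝ) < r :=
    (spectrum.pow_nnnorm_pow_one_div_tendsto_nhds_spectralRadius a).eventually_lt_const hρr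
  refine .of_norm_bounded_eventually_nat (g := fun k => (r : ℝ) ^ k)
    (summable_geometric_of_lt_one r.2 (mod_cast hr1)) ?_
  filter_upwards [hroot, eventually_ne_atTop 0] with k hk hk0
  rw [← ENNReal.coe_rpow_of_nonneg _ (by positivity), ENNReal.coe_lt_coe, one_div] at hk
  rw [norm_norm, ← coe_nnnorm, ← NNReal.coe_pow, NNReal.coe_le_coe,
    ← NNReal.rpow_inv_natCast_pow (‖a ^ k‖₊) hk0]
  exact pow_le_pow_left₀ zero_le hk.le k

theorem Summable.sq_of_nonneg {ι : Type*} {f : ι → ℝ} (hf : Summable f) (hf0 : ∀ i, 0 ≤ f i) :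
    Summable fun i => f i ^ 2 :=
  .of_nonneg_of_le (fun i => sq_nonneg _)
    (fun i => by rw [sq]; exact mul_le_mul_of_nonneg_right (hf.le_tsum i fun j _ => hf0 j) (hf0 i))
    (hf.mul_left (∑' i, f i))

theorem bddAbove_range_sqrt_of_summable {ι : Type*} {f : ι → ℝ} (hf : Summable f) :
    BddAbove (Set.range fun i => √(f i)) := by
  obtain ⟨B, hB⟩ := hf.tendsto_cofinite_zero.bddAbove_range_of_cofinite
  exact ⟨√B, Set.forall_mem_range.2 fun i => Real.sqrt_le_sqrt (hB (Set.mem_range_self i))⟩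

section EuclideanNorm

variable {ι κ α : Type*} [Fintype ι] [Fintype κ] [SeminormedAddCommGroup α]

theorem norm_toLp_two_eq_sqrt (v : ι → α) : ‖toLp 2 v‖ = √(∑ i, ‖v i‖ ^ 2) := by
  simp [PiLp.norm_eq_of_L2]

theorem norm_toLp_two_sq (v : ι → α) : ‖toLp 2 v‖ ^ 2 = ∑ i, ‖v i‖ ^ 2 :=
  PiLp.norm_sq_eq_of_L2 _ _

theorem norm_toLp_two_star [StarAddMonoid α] [NormedStarGroup α] (v : ι → α) :
    ‖toLp 2 (star v)‖ = ‖toLp 2 v‖ := by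
  simp [norm_toLp_two_eq_sqrt]

theorem norm_toLp_two_sumElim_sq (a : ι → α) (b : κ → α) :
    ‖toLp 2 (Sum.elim a b)‖ ^ 2 = ‖toLp 2 a‖ ^ 2 + ‖toLp 2 b‖ ^ 2 := by
  simp [norm_toLp_two_sq, Fintype.sum_sum_type]

theorem norm_toLp_two_sumElim_le (a : ι → α) (b : κ → α) :
    ‖toLp 2 (Sum.elim a b)‖ ≤ ‖toLp 2 a‖ + ‖toLp 2 b‖ := by
  have := norm_toLp_two_sumElim_sq a b
  nlinarith [norm_nonneg (toLp 2 a), norm_nonneg (toLp 2 b), norm_nonneg (toLp 2 (Sum.elim a b))]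

end EuclideanNorm

section Frobenius

attribute [local instance] Matrix.frobeniusNormedAddCommGroup Matrix.frobeniusNormedSpace

variable {ι κ : Type*} [Fintype ι] [Fintype κ]

theorem frob_eq_norm (M : Matrix ι κ ℂ) : frob M = ‖M‖ := by
  simp [frob, frobenius_norm_def, Real.sqrt_eq_rpow]

theorem norm_vecMulVec {α : Type*} [NormedDivisionRing α] (a : ι → α) (b : κ → α) :
    ‖vecMulVec a b‖ = ‖toLp 2 a‖ * ‖toLp 2 b‖ := by
  simp only [frobenius_norm_def, norm_toLp_two_eq_sqrt, vecMulVec_apply, norm_mul, mul_pow,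
    ← Finset.sum_mul_sum, Real.rpow_two, ← Real.sqrt_eq_rpow]
  exact Real.sqrt_mul (Finset.sum_nonneg fun i _ => by positivity) _

theorem outer_eq_vecMulVec (v : ι → ℂ) : outer v = vecMulVec v (star v) := rfl

theorem norm_outer (v : ι → ℂ) : ‖outer v‖ = ‖toLp 2 v‖ ^ 2 := by
  rw [outer_eq_vecMulVec, norm_vecMulVec, norm_toLp_two_star, sq]

theorem outer_add_sub_outer (u v : ι → ℂ) :
    outer (u + v) - outer u = vecMulVec u (star v) + vecMulVec v (star u) + outer v := by
  simp only [outer_eq_vecMulVec, star_add, vecMulVec_add, add_vecMulVec]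
  abel

theorem norm_outer_add_sub_outer_le (u v : ι → ℂ) :
    ‖outer (u + v) - outer u‖ ≤ 2 * ‖toLp 2 u‖ * ‖toLp 2 v‖ + ‖toLp 2 v‖ ^ 2 := by
  rw [outer_add_sub_outer]
  refine norm_add₃_le.trans_eq ?_
  rw [norm_vecMulVec, norm_vecMulVec, norm_outer, norm_toLp_two_star, norm_toLp_two_star]
  ring

theorem norm_tsum_outer_add_sub_tsum_outer_le {u v : ℕ → ι → ℂ} {c : ℕ → ℝ} {U V : ℝ}
    (hu : Summable fun k => ‖toLp 2 (u k)‖ ^ 2) (hc : Summable fun k => 2 * c k + c k ^ 2)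
    (hc0 : ∀ k, 0 ≤ c k) (hU : ∀ k, ‖toLp 2 (u k)‖ ≤ U) (hV : ∀ k, ‖toLp 2 (v k)‖ ≤ c k * V) :
    ‖∑' k, outer (u k + v k) - ∑' k, outer (u k)‖ ≤
      (∑' k, (2 * c k + c k ^ 2)) * max (U * V) (V ^ 2) := by
  set M := max (U * V) (V ^ 2)
  have hterm (k : ℕ) : ‖outer (u k + v k) - outer (u k)‖ ≤ (2 * c k + c k ^ 2) * M := by
    have hu0 := norm_nonneg (toLp 2 (u k))
    have hUV : U * V ≤ M := le_max_left _ _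
    have hVV : V ^ 2 ≤ M := le_max_right _ _
    calc ‖outer (u k + v k) - outer (u k)‖
        ≤ 2 * ‖toLp 2 (u k)‖ * ‖toLp 2 (v k)‖ + ‖toLp 2 (v k)‖ ^ 2 :=
          norm_outer_add_sub_outer_le _ _
      _ ≤ 2 * U * (c k * V) + (c k * V) ^ 2 := by
          have hU0 : 0 ≤ U := hu0.trans (hU k)
          gcongr
          exacts [hU k, hV k, hV k]
      _ ≤ (2 * c k + c k ^ 2) * M := by
          nlinarith [hc0 k, mul_le_mul_of_nonneg_left hUV (hc0 k),
            mul_le_mul_of_nonneg_left hVV (sq_nonneg (c k))]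
  -- Instance search does not see `Matrix.instCompleteSpace` through the Frobenius uniformity.
  have := FiniteDimensional.complete ℂ (Matrix ι ι ℂ)
  have hsu : Summable fun k => outer (u k) := .of_norm (by simpa only [norm_outer] using hu)
  have hsd : Summable fun k => outer (u k + v k) - outer (u k) :=
    .of_norm_bounded (hc.mul_right M) hterm
  rw [← (by simpa using hsd.add hsu : Summable fun k => outer (u k + v k)).tsum_sub hsu,
    ← tsum_mul_right]
  exact tsum_of_norm_bounded (hc.mul_right M).hasSum hterm

end Frobenius

/-- perturbation bound for the gramian when the state is perturbed by a
free response `y_k = A^k y₀`. -/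
theorem gramian_perturbation_bound {n m : ℕ}
    (A : Matrix (Fin n) (Fin n) ℂ) (hA : spectralRadius ℂ A < 1) :
    ∃ C : ℝ, ∀ (x : ℕ → Fin n → ℂ) (w : ℕ → Fin m → ℂ) (y : ℕ → Fin n → ℂ),
      Summable (fun k => ∑ i, ‖x k i‖ ^ 2) →
      Summable (fun k => ∑ i, ‖w k i‖ ^ 2) →
      (∀ k, y k = (A ^ k).mulVec (y 0)) →
      frob (gram (fun k => x k + y k) w - gram x w) ≤
        C * max
          (((⨆ k, Real.sqrt (∑ i, ‖x k i‖ ^ 2)) + ⨆ k, Real.sqrt (∑ i, ‖w k i‖ ^ 2)) *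
            Real.sqrt (∑ i, ‖y 0 i‖ ^ 2))
          (∑ i, ‖y 0 i‖ ^ 2) := by
  set T := toEuclideanCLM (n := Fin n) (𝕜 := ℂ) A
  have hT : Summable fun k => ‖T ^ k‖ :=
    summable_norm_pow_of_spectralRadius_lt_one (by simpa [T, spectralRadius] using hA)
  refine ⟨∑' k, (2 * ‖T ^ k‖ + ‖T ^ k‖ ^ 2), fun x w y hx hw hy => ?_⟩
  have hgram : gram (fun k => x k + y k) w =
      ∑' k, outer (Sum.elim (x k) (w k) + Sum.elim (y k) 0) := by
    simp only [_root_.gram, ← Sum.elim_add_add, add_zero]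
  have hu : Summable fun k => ‖toLp 2 (Sum.elim (x k) (w k))‖ ^ 2 := by
    simp_rw [norm_toLp_two_sumElim_sq, norm_toLp_two_sq]
    exact hx.add hw
  have hu_le (k : ℕ) : ‖toLp 2 (Sum.elim (x k) (w k))‖ ≤
      (⨆ k, √(∑ i, ‖x k i‖ ^ 2)) + ⨆ k, √(∑ i, ‖w k i‖ ^ 2) := by
    refine (norm_toLp_two_sumElim_le _ _).trans (add_le_add ?_ ?_) <;> rw [norm_toLp_two_eq_sqrt]
    exacts [le_ciSup (bddAbove_range_sqrt_of_summable hx) k,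
      le_ciSup (bddAbove_range_sqrt_of_summable hw) k]
  have hv_le (k : ℕ) :
      ‖toLp 2 (Sum.elim (y k) (0 : Fin m → ℂ))‖ ≤ ‖T ^ k‖ * ‖toLp 2 (y 0)‖ :=
    calc ‖toLp 2 (Sum.elim (y k) (0 : Fin m → ℂ))‖ ≤ ‖toLp 2 (y k)‖ := by
          simpa using norm_toLp_two_sumElim_le (y k) (0 : Fin m → ℂ)
      _ = ‖(T ^ k) (toLp 2 (y 0))‖ := by rw [← map_pow, toEuclideanCLM_toLp, ← hy]
      _ ≤ ‖T ^ k‖ * ‖toLp 2 (y 0)‖ := (T ^ k).le_opNorm _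
  rw [frob_eq_norm, hgram, ← norm_toLp_two_eq_sqrt (y 0), ← norm_toLp_two_sq (y 0)]
  exact norm_tsum_outer_add_sub_tsum_outer_le hu
    ((hT.mul_left 2).add (hT.sq_of_nonneg fun _ => norm_nonneg _)) (fun _ => norm_nonneg _)
    hu_le hv_le
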